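/- Inverse-CDF sampling for the Laplace distribution: if p is uniformly distributed on the open interval (0,1), then the random variable L = -(1/ε) · sgn(p - 1/2) · ln(1 - 2|p - 1/2|) has the Laplace distribution with mean 0 and scale 1/ε, i.e., its density is (ε/2) · exp(-ε|x|). -/

import Mathlib

/-!
On `(0, 1)` the sampling map is a right inverse of the Laplace CDF `F`, and `F` is strictly
increasing, so `L p ≤ a ↔ p ≤ F a`: the push-forward of the uniform law has CDF `F`. Since `F`
is an antiderivative of the density that vanishes at `-∞`, the measure with that density has
CDF `F` as well, and a finite measure on `ℝ` is determined by its CDF.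
-/

open MeasureTheory Real Set Filter Topology

theorem map_volume_Ioo_zero_one_eq_of_cdf {F Q : ℝ → ℝ} {μ : Measure ℝ} (hQ : Measurable Q)
    (hF : StrictMono F) (hF_lt_one : ∀ x, F x < 1) (hFQ : ∀ p ∈ Ioo 0 1, F (Q p) = p)
    (hμ : ∀ a, μ (Iic a) = ENNReal.ofReal (F a)) :
    (volume.restrict (Ioo 0 1)).map Q = μ := by
  have : IsFiniteMeasure (volume.restrict (Ioo (0 : ℝ) 1)) :=
    isFiniteMeasure_restrict.mpr measure_Ioo_lt_top.ne
  refine Measure.ext_of_Iic _ _ fun a => ?_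
  have hpreimage : Q ⁻¹' Iic a ∩ Ioo 0 1 = Ioc 0 (F a) := by
    ext p
    simp only [mem_inter_iff, mem_preimage, mem_Iic, mem_Ioo, mem_Ioc]
    constructor
    · rintro ⟨hpa, hp⟩
      exact ⟨hp.1, (hFQ p hp).symm.trans_le (hF.monotone hpa)⟩
    · rintro ⟨hp0, hpa⟩
      have hp : p ∈ Ioo 0 1 := ⟨hp0, hpa.trans_lt (hF_lt_one a)⟩
      exact ⟨hF.le_iff_le.mp ((hFQ p hp).trans_le hpa), hp⟩
  rw [Measure.map_apply hQ measurableSet_Iic, Measure.restrict_apply (hQ measurableSet_Iic),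
    hpreimage, volume_Ioc, sub_zero, hμ]

@[fun_prop]
theorem measurable_sign : Measurable Real.sign := by
  unfold Real.sign
  exact Measurable.ite measurableSet_Iio measurable_const
    (Measurable.ite measurableSet_Ioi measurable_const measurable_const)

/-- The Laplace CDF, parametrized by the rate `ε = 1 / b` rather than by the scale `b`. -/
noncomputable def laplaceCDF (ε x : ℝ) : ℝ :=
  1 / 2 + 1 / 2 * Real.sign x * (1 - exp (-(ε * |x|)))

noncomputable def laplacePDF (ε x : ℝ) : ℝ := ε / 2 * exp (-(ε * |x|))

noncomputable def laplaceQuantile (ε p : ℝ) : ℝ :=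
  -(1 / ε) * Real.sign (p - 1 / 2) * log (1 - 2 * |p - 1 / 2|)

section

variable {ε : ℝ}

theorem laplaceCDF_of_nonpos {x : ℝ} (hx : x ≤ 0) : laplaceCDF ε x = exp (ε * x) / 2 := by
  rcases hx.lt_or_eq with hx | rfl
  · rw [laplaceCDF, Real.sign_of_neg hx, abs_of_neg hx]
    ring_nf
  · simp [laplaceCDF]

theorem laplaceCDF_of_nonneg {x : ℝ} (hx : 0 ≤ x) :
    laplaceCDF ε x = 1 - exp (-(ε * x)) / 2 := by
  rcases hx.lt_or_eq with hx | rfl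
  · rw [laplaceCDF, Real.sign_of_pos hx, abs_of_pos hx]
    ring
  · norm_num [laplaceCDF]

theorem laplaceCDF_lt_one (hε : 0 ≤ ε) (x : ℝ) : laplaceCDF ε x < 1 := by
  rcases le_total x 0 with hx | hx
  · rw [laplaceCDF_of_nonpos hx]
    linarith [exp_le_one_iff.mpr (mul_nonpos_of_nonneg_of_nonpos hε hx)]
  · rw [laplaceCDF_of_nonneg hx]
    linarith [exp_pos (-(ε * x))]

theorem strictMono_laplaceCDF (hε : 0 < ε) : StrictMono (laplaceCDF ε) := by
  refine StrictMonoOn.Iic_union_Ici (a := 0) (fun x hx y hy hxy => ?_) fun x hx y hy hxy => ?_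
  · rw [laplaceCDF_of_nonpos hx, laplaceCDF_of_nonpos hy]
    gcongr
  · rw [laplaceCDF_of_nonneg hx, laplaceCDF_of_nonneg hy]
    gcongr

theorem tendsto_laplaceCDF_atBot (hε : 0 < ε) : Tendsto (laplaceCDF ε) atBot (𝓝 0) := by
  have hexp : Tendsto (fun x => exp (ε * x) / 2) atBot (𝓝 0) := by
    simpa using (tendsto_exp_atBot.comp (tendsto_id.const_mul_atBot hε)).div_const 2
  refine hexp.congr' ?_
  filter_upwards [Iic_mem_atBot 0] with x hx using (laplaceCDF_of_nonpos hx).symm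

theorem hasDerivAt_laplaceCDF (x : ℝ) : HasDerivAt (laplaceCDF ε) (laplacePDF ε x) x := by
  have hleft : ∀ y, HasDerivAt (fun y => exp (ε * y) / 2) (ε / 2 * exp (ε * y)) y := fun y =>
    (((hasDerivAt_id' y).const_mul ε).exp.div_const 2).congr_deriv (by ring)
  have hright : ∀ y, HasDerivAt (fun y => 1 - exp (-(ε * y)) / 2) (ε / 2 * exp (-(ε * y))) y :=
    fun y => ((((hasDerivAt_id' y).const_mul ε).fun_neg.exp.div_const 2).const_sub 1).congr_deriv
      (by ring)
  rcases lt_trichotomy x 0 with hx | rfl | hx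
  · rw [laplacePDF, abs_of_neg hx, mul_neg, neg_neg]
    refine (hleft x).congr_of_eventuallyEq ?_
    filter_upwards [Iic_mem_nhds hx] with y hy using laplaceCDF_of_nonpos hy
  · have hl := (hleft 0).hasDerivWithinAt.congr (s := Iic 0)
      (fun y hy => laplaceCDF_of_nonpos hy) (laplaceCDF_of_nonpos le_rfl)
    have hr := (hright 0).hasDerivWithinAt.congr (s := Ici 0)
      (fun y hy => laplaceCDF_of_nonneg hy) (laplaceCDF_of_nonneg le_rfl)
    simp only [mul_zero, neg_zero] at hl hr
    have h := hl.union hr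
    rw [Iic_union_Ici, hasDerivWithinAt_univ] at h
    simpa [laplacePDF] using h
  · rw [laplacePDF, abs_of_pos hx]
    refine (hright x).congr_of_eventuallyEq ?_
    filter_upwards [Ici_mem_nhds hx] with y hy using laplaceCDF_of_nonneg hy

theorem integrable_laplacePDF (hε : 0 < ε) : Integrable (laplacePDF ε) := by
  rw [← integrableOn_univ, ← Iic_union_Ioi (a := 0), integrableOn_union]
  constructor
  · refine IntegrableOn.congr_fun ((integrableOn_exp_mul_Iic hε 0).const_mul (ε / 2))
      (fun x hx => ?_) measurableSet_Iic
    rw [laplacePDF, abs_of_nonpos hx, mul_neg, neg_neg]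
  · refine IntegrableOn.congr_fun
      ((integrableOn_exp_mul_Ioi (neg_lt_zero.mpr hε) 0).const_mul (ε / 2)) (fun x hx => ?_)
      measurableSet_Ioi
    rw [laplacePDF, abs_of_pos hx, neg_mul]

theorem lintegral_laplacePDF_Iic (hε : 0 < ε) (a : ℝ) :
    ∫⁻ x in Iic a, ENNReal.ofReal (laplacePDF ε x) = ENNReal.ofReal (laplaceCDF ε a) := by
  have hpdf_nonneg : ∀ x, 0 ≤ laplacePDF ε x := fun x => by unfold laplacePDF; positivity
  rw [← ofReal_integral_eq_lintegral_ofReal (integrable_laplacePDF hε).integrableOn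
      (ae_of_all _ hpdf_nonneg),
    integral_Iic_of_hasDerivAt_of_tendsto' (fun x _ => hasDerivAt_laplaceCDF x)
      (integrable_laplacePDF hε).integrableOn (tendsto_laplaceCDF_atBot hε), sub_zero]

theorem laplaceQuantile_of_lt_half {p : ℝ} (hp : p < 1 / 2) :
    laplaceQuantile ε p = log (2 * p) / ε := by
  have hneg : p - 1 / 2 < 0 := by linarith
  rw [laplaceQuantile, Real.sign_of_neg hneg, abs_of_neg hneg]
  ring_nf

theorem laplaceQuantile_of_half_lt {p : ℝ} (hp : 1 / 2 < p) :
    laplaceQuantile ε p = -(log (2 * (1 - p)) / ε) := by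
  have hpos : 0 < p - 1 / 2 := by linarith
  rw [laplaceQuantile, Real.sign_of_pos hpos, abs_of_pos hpos]
  ring_nf

theorem measurable_laplaceQuantile : Measurable (laplaceQuantile ε) := by
  unfold laplaceQuantile
  fun_prop

theorem laplaceCDF_laplaceQuantile (hε : 0 < ε) {p : ℝ} (hp : p ∈ Ioo 0 1) :
    laplaceCDF ε (laplaceQuantile ε p) = p := by
  obtain ⟨hp0, hp1⟩ := hp
  rcases lt_trichotomy p (1 / 2) with hlt | rfl | hgt
  · have hlog : log (2 * p) ≤ 0 := log_nonpos (by linarith) (by linarith)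
    rw [laplaceQuantile_of_lt_half hlt,
      laplaceCDF_of_nonpos (div_nonpos_of_nonpos_of_nonneg hlog hε.le),
      mul_div_cancel₀ _ hε.ne', exp_log (by linarith)]
    ring
  · simp [laplaceQuantile, laplaceCDF]
  · have hlog : log (2 * (1 - p)) ≤ 0 := log_nonpos (by linarith) (by linarith)
    rw [laplaceQuantile_of_half_lt hgt,
      laplaceCDF_of_nonneg (neg_nonneg.mpr (div_nonpos_of_nonpos_of_nonneg hlog hε.le)),
      mul_neg, neg_neg, mul_div_cancel₀ _ hε.ne', exp_log (by linarith)]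
    ring

end

/-- Inverse-CDF sampling for the Laplace distribution: if `p` is uniform on
`(0,1)`, then `L(p) = -(1/ε) sgn(p - 1/2) ln(1 - 2|p - 1/2|)` has the Laplace distribution
with mean 0 and scale `1/ε`, i.e., density `(ε/2) exp(-ε|x|)`. -/
theorem inverse_cdf_laplace_sampling (ε : ℝ) (hε : 0 < ε)
    (L : ℝ → ℝ)
    (hL : ∀ p, L p = -(1 / ε) * Real.sign (p - 1/2) * Real.log (1 - 2 * |p - 1/2|)) :
    Measure.map L (volume.restrict (Set.Ioo (0:ℝ) 1)) =
      volume.withDensity (fun x => ENNReal.ofReal (ε / 2 * Real.exp (-(ε * |x|)))) := by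
  obtain rfl : L = laplaceQuantile ε := funext hL
  refine map_volume_Ioo_zero_one_eq_of_cdf measurable_laplaceQuantile (strictMono_laplaceCDF hε)
    (laplaceCDF_lt_one hε.le) (fun p hp => laplaceCDF_laplaceQuantile hε hp) fun a => ?_
  rw [withDensity_apply _ measurableSet_Iic]
  exact lintegral_laplacePDF_Iic hε a
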